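/- For every prime m ≥ 3, there is a parity-oblivious qubit strategy with two-outcome projective measurements for the (2,m) parity-oblivious random exclusion code achieving success probability exactly (m−1)/m + 1/(m·√2); explicitly, take a(0) = −ẑ/√2, a(1) = ẑ/√2, a(l) = 0 for l ∉ {0,1}, b(0) = −x̂/√2, b(1) = x̂/√2, b(l) = 0 for l ∉ {0,1}, states ρ_{x_1 x_2} = (1/2)(I + (a(x_1)+b(x_2))·σ), and measurements M_{0|1} = (1/2)(I+σ_z), M_{1|1} = (1/2)(I−σ_z), M_{0|2} = (1/2)(I+σ_x), M_{1|2} = (1/2)(I−σ_x), with M_{b|y} = 0 for b ∉ {0,1}. -/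

import Mathlib

open Finset
open scoped ComplexOrder

noncomputable section

/-- Pauli matrix `σ_x`. -/
def sigmaX : Matrix (Fin 2) (Fin 2) ℂ := !![0, 1; 1, 0]

/-- Pauli matrix `σ_y`. -/
def sigmaY : Matrix (Fin 2) (Fin 2) ℂ := !![0, -Complex.I; Complex.I, 0]

/-- Pauli matrix `σ_z`. -/
def sigmaZ : Matrix (Fin 2) (Fin 2) ℂ := !![1, 0; 0, -1]

/-- `v·σ = v₁σ_x + v₂σ_y + v₃σ_z` for `v ∈ ℝ³`. -/
def dotSigma (v : EuclideanSpace ℝ (Fin 3)) : Matrix (Fin 2) (Fin 2) ℂ :=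
  v 0 • sigmaX + v 1 • sigmaY + v 2 • sigmaZ

/-- The single-digit Bloch components `a(0) = -ẑ/√2`, `a(1) = ẑ/√2`, `a(l) = 0` otherwise. -/
def aVec (m : ℕ) [NeZero m] : ZMod m → EuclideanSpace ℝ (Fin 3) := fun l =>
  if l = 0 then -((Real.sqrt 2)⁻¹ • EuclideanSpace.single (2 : Fin 3) (1 : ℝ))
  else if l = 1 then (Real.sqrt 2)⁻¹ • EuclideanSpace.single (2 : Fin 3) (1 : ℝ)
  else 0

/-- The single-digit Bloch components `b(0) = -x̂/√2`, `b(1) = x̂/√2`, `b(l) = 0` otherwise. -/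
def bVec (m : ℕ) [NeZero m] : ZMod m → EuclideanSpace ℝ (Fin 3) := fun l =>
  if l = 0 then -((Real.sqrt 2)⁻¹ • EuclideanSpace.single (0 : Fin 3) (1 : ℝ))
  else if l = 1 then (Real.sqrt 2)⁻¹ • EuclideanSpace.single (0 : Fin 3) (1 : ℝ)
  else 0

/-- The states `ρ_{x₁x₂} = (1/2)(I + (a(x₁) + b(x₂))·σ)`. -/
def porecState (m : ℕ) [NeZero m] (x₁ x₂ : ZMod m) : Matrix (Fin 2) (Fin 2) ℂ :=
  (1 / 2 : ℝ) • ((1 : Matrix (Fin 2) (Fin 2) ℂ) + dotSigma (aVec m x₁ + bVec m x₂))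

/-- The projective measurement for `y = 1`: `σ_z` projectors, other outcomes null. -/
def porecMeas₁ (m : ℕ) [NeZero m] (b : ZMod m) : Matrix (Fin 2) (Fin 2) ℂ :=
  if b = 0 then (1 / 2 : ℝ) • ((1 : Matrix (Fin 2) (Fin 2) ℂ) + sigmaZ)
  else if b = 1 then (1 / 2 : ℝ) • ((1 : Matrix (Fin 2) (Fin 2) ℂ) - sigmaZ)
  else 0

/-- The projective measurement for `y = 2`: `σ_x` projectors, other outcomes null. -/
def porecMeas₂ (m : ℕ) [NeZero m] (b : ZMod m) : Matrix (Fin 2) (Fin 2) ℂ :=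
  if b = 0 then (1 / 2 : ℝ) • ((1 : Matrix (Fin 2) (Fin 2) ℂ) + sigmaX)
  else if b = 1 then (1 / 2 : ℝ) • ((1 : Matrix (Fin 2) (Fin 2) ℂ) - sigmaX)
  else 0

/-!
Writing a qubit state as `(1 + v·σ)/2`, the Pauli relation `(v·σ)² = ‖v‖²` makes `‖v‖ + v·σ`
(for `v ≠ 0`) a positive multiple of its own square, so `(1 + v·σ)/2` is a state whenever `‖v‖ ≤ 1`, and
`Tr((1 + u·σ)(1 + w·σ))/4 = (1 + u·w)/2`. Parity-obliviousness holds because `ρ_x = f x₁ + g x₂`: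
over a field, a line `r₁ x₁ + r₂ x₂ = k` with `r₁, r₂ ≠ 0` meets every value of `x₁` and of `x₂`
exactly once, so every line sum is `∑ f + ∑ g`. Since each measurement sums to `1`, excluding
`x_y` fails only with the probability `Tr(ρ_x M_{x_y|y})` of naming `x_y` itself, which is
`(1 - 1/√2)/2` for `x_y ∈ {0, 1}` and `0` otherwise.
-/

open Matrix

def blochMatrix (v : EuclideanSpace ℝ (Fin 3)) : Matrix (Fin 2) (Fin 2) ℂ :=
  (1 / 2 : ℝ) • (1 + dotSigma v)

lemma dotSigma_add (u v : EuclideanSpace ℝ (Fin 3)) :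
    dotSigma (u + v) = dotSigma u + dotSigma v := by
  simp only [dotSigma, PiLp.add_apply, add_smul]; abel

lemma dotSigma_neg (v : EuclideanSpace ℝ (Fin 3)) : dotSigma (-v) = -dotSigma v := by
  simp only [dotSigma, PiLp.neg_apply, neg_smul]; abel

lemma dotSigma_zero : dotSigma 0 = 0 := by simp [dotSigma]

lemma dotSigma_single_zero : dotSigma (EuclideanSpace.single 0 1) = sigmaX := by
  simp [dotSigma]

lemma dotSigma_single_two : dotSigma (EuclideanSpace.single 2 1) = sigmaZ := by
  simp [dotSigma]

lemma dotSigma_isHermitian (v : EuclideanSpace ℝ (Fin 3)) : (dotSigma v).IsHermitian := by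
  ext i j
  fin_cases i <;> fin_cases j <;> simp [dotSigma, sigmaX, sigmaY, sigmaZ]

lemma trace_dotSigma (v : EuclideanSpace ℝ (Fin 3)) : (dotSigma v).trace = 0 := by
  simp [dotSigma, sigmaX, sigmaY, sigmaZ, trace_fin_two]

lemma dotSigma_mul_self (v : EuclideanSpace ℝ (Fin 3)) :
    dotSigma v * dotSigma v = (‖v‖ ^ 2 : ℝ) • 1 := by
  rw [EuclideanSpace.real_norm_sq_eq, Fin.sum_univ_three]
  ext i j
  fin_cases i <;> fin_cases j <;>
    simp [dotSigma, sigmaX, sigmaY, sigmaZ, Matrix.mul_apply, Fin.sum_univ_two] <;> ring_nf <;>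
    simp [Complex.I_sq]

lemma trace_blochMatrix (v : EuclideanSpace ℝ (Fin 3)) : (blochMatrix v).trace = 1 := by
  simp [blochMatrix, trace_add, trace_dotSigma]

lemma re_trace_blochMatrix_mul_blochMatrix (u v : EuclideanSpace ℝ (Fin 3)) :
    (blochMatrix u * blochMatrix v).trace.re = (1 + inner ℝ u v) / 2 := by
  simp [blochMatrix, dotSigma, sigmaX, sigmaY, sigmaZ, trace_fin_two, Matrix.mul_apply,
    PiLp.inner_apply, Fin.sum_univ_three]
  ring

lemma blochMatrix_add_blochMatrix_neg (v : EuclideanSpace ℝ (Fin 3)) :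
    blochMatrix v + blochMatrix (-v) = 1 := by
  simp only [blochMatrix, dotSigma_neg]; module

lemma posSemidef_norm_smul_one_add_dotSigma (v : EuclideanSpace ℝ (Fin 3)) :
    (‖v‖ • 1 + dotSigma v).PosSemidef := by
  rcases eq_or_ne v 0 with rfl | hv
  · simpa [dotSigma_zero] using PosSemidef.zero
  set A := ‖v‖ • (1 : Matrix (Fin 2) (Fin 2) ℂ) + dotSigma v
  have hA : A.IsHermitian := (isHermitian_one.smul (.all _)).add (dotSigma_isHermitian v)
  have hsq : Aᴴ * A = (2 * ‖v‖) • A := by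
    rw [hA.eq]
    simp only [A, add_mul, mul_add, one_mul, mul_one, smul_mul_assoc, mul_smul_comm,
      dotSigma_mul_self]
    module
  have hr : 0 < 2 * ‖v‖ := by positivity
  have : A = (2 * ‖v‖)⁻¹ • (Aᴴ * A) := by rw [hsq, smul_smul, inv_mul_cancel₀ hr.ne', one_smul]
  rw [this]
  exact (posSemidef_conjTranspose_mul_self A).smul (inv_nonneg.mpr hr.le)

lemma posSemidef_blochMatrix {v : EuclideanSpace ℝ (Fin 3)} (hv : ‖v‖ ≤ 1) :
    (blochMatrix v).PosSemidef := by
  have : blochMatrix v = ((1 - ‖v‖) / 2) • 1 + (1 / 2 : ℝ) • (‖v‖ • 1 + dotSigma v) := by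
    simp only [blochMatrix]; module
  rw [this]
  exact (PosSemidef.one.smul (by linarith)).add
    ((posSemidef_norm_smul_one_add_dotSigma v).smul (by norm_num))

lemma sum_ite_eq_ite_eq {ι M : Type*} [Fintype ι] [DecidableEq ι] [AddCommMonoid M] {u v : ι}
    (huv : u ≠ v) (A B : M) :
    ∑ b, (if b = u then A else if b = v then B else 0) = A + B := by
  have ite_eq_add (b : ι) : (if b = u then A else if b = v then B else 0) =
      (if b = u then A else 0) + (if b = v then B else 0) := by
    by_cases hb : b = u
    · simp [hb, huv]
    · simp [hb]
  simp [ite_eq_add, Finset.sum_add_distrib]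

section BlochMeasurement

variable {ι : Type*} [DecidableEq ι]

def blochMeasurement (u u' : ι) (w : EuclideanSpace ℝ (Fin 3)) (b : ι) :
    Matrix (Fin 2) (Fin 2) ℂ :=
  if b = u then blochMatrix w else if b = u' then blochMatrix (-w) else 0

lemma posSemidef_blochMeasurement (u u' : ι) {w : EuclideanSpace ℝ (Fin 3)} (hw : ‖w‖ ≤ 1)
    (b : ι) : (blochMeasurement u u' w b).PosSemidef := by
  unfold blochMeasurement
  split_ifs
  · exact posSemidef_blochMatrix hw
  · exact posSemidef_blochMatrix (by rwa [norm_neg])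
  · exact PosSemidef.zero

lemma sum_blochMeasurement [Fintype ι] {u u' : ι} (hu : u ≠ u') (w : EuclideanSpace ℝ (Fin 3)) :
    ∑ b, blochMeasurement u u' w b = 1 := by
  simp only [blochMeasurement, sum_ite_eq_ite_eq hu, blochMatrix_add_blochMatrix_neg]

lemma re_trace_blochMatrix_mul_blochMeasurement (v : EuclideanSpace ℝ (Fin 3)) (u u' : ι)
    (w : EuclideanSpace ℝ (Fin 3)) (b : ι) :
    (blochMatrix v * blochMeasurement u u' w b).trace.re =
      if b = u then (1 + inner ℝ v w) / 2 else if b = u' then (1 - inner ℝ v w) / 2 else 0 := by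
  unfold blochMeasurement
  split_ifs <;> simp [re_trace_blochMatrix_mul_blochMatrix, sub_eq_add_neg]

end BlochMeasurement

section LineSums

variable {F M : Type*} [Field F] [Fintype F] [DecidableEq F] [AddCommMonoid M]

lemma sum_filter_linear_eq_fst {r₂ : F} (hr₂ : r₂ ≠ 0) (r₁ k : F) (f : F → M) :
    ∑ x ∈ univ.filter (fun x : F × F => r₁ * x.1 + r₂ * x.2 = k), f x.1 = ∑ t, f t := by
  rw [Finset.sum_filter, Fintype.sum_prod_type]
  refine Finset.sum_congr rfl fun t _ => ?_
  simp_rw [← eq_sub_iff_add_eq', ← eq_inv_mul_iff_mul_eq₀ hr₂]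
  simp

lemma sum_filter_linear_eq_snd {r₁ : F} (hr₁ : r₁ ≠ 0) (r₂ k : F) (f : F → M) :
    ∑ x ∈ univ.filter (fun x : F × F => r₁ * x.1 + r₂ * x.2 = k), f x.2 = ∑ t, f t := by
  rw [Finset.sum_filter, Fintype.sum_prod_type_right]
  refine Finset.sum_congr rfl fun t _ => ?_
  simp_rw [← eq_sub_iff_add_eq, ← eq_inv_mul_iff_mul_eq₀ hr₁]
  simp

lemma sum_filter_linear_eq_add {r₁ r₂ : F} (hr₁ : r₁ ≠ 0) (hr₂ : r₂ ≠ 0) (k : F)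
    (f g : F → M) :
    ∑ x ∈ univ.filter (fun x : F × F => r₁ * x.1 + r₂ * x.2 = k), (f x.1 + g x.2) =
      ∑ t, f t + ∑ t, g t := by
  rw [Finset.sum_add_distrib, sum_filter_linear_eq_fst hr₂, sum_filter_linear_eq_snd hr₁]

end LineSums

lemma sum_filter_ne_re_trace_mul {n ι : Type*} [Fintype n] [DecidableEq n] [Fintype ι]
    [DecidableEq ι]
    (ρ : Matrix n n ℂ) {M : ι → Matrix n n ℂ} (hM : ∑ b, M b = 1) (t : ι) :
    ∑ b ∈ univ.filter (· ≠ t), (ρ * M b).trace.re = ρ.trace.re - (ρ * M t).trace.re := by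
  rw [Finset.filter_ne', Finset.sum_erase_eq_sub (Finset.mem_univ t), ← Complex.re_sum,
    ← trace_sum, ← Finset.mul_sum, hM, mul_one]

section Porec

variable (m : ℕ)

def porecCoeff (l : ZMod m) : ℝ :=
  if l = 0 then -(√2)⁻¹ else if l = 1 then (√2)⁻¹ else 0

def porecGuess (l : ZMod m) : ℝ :=
  if l = 0 then (1 - (√2)⁻¹) / 2 else if l = 1 then (1 - (√2)⁻¹) / 2 else 0

lemma aVec_eq_smul [NeZero m] (l : ZMod m) :
    aVec m l = porecCoeff m l • EuclideanSpace.single 2 1 := by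
  unfold aVec porecCoeff; split_ifs <;> simp [neg_smul]

lemma bVec_eq_smul [NeZero m] (l : ZMod m) :
    bVec m l = porecCoeff m l • EuclideanSpace.single 0 1 := by
  unfold bVec porecCoeff; split_ifs <;> simp [neg_smul]

lemma porecCoeff_sq_le (l : ZMod m) : porecCoeff m l ^ 2 ≤ 1 / 2 := by
  unfold porecCoeff; split_ifs <;> norm_num

lemma norm_aVec_add_bVec_le_one [NeZero m] (x₁ x₂ : ZMod m) : ‖aVec m x₁ + bVec m x₂‖ ≤ 1 := by
  have h : ‖aVec m x₁ + bVec m x₂‖ ^ 2 = porecCoeff m x₁ ^ 2 + porecCoeff m x₂ ^ 2 := by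
    simp [aVec_eq_smul, bVec_eq_smul, EuclideanSpace.real_norm_sq_eq, Fin.sum_univ_three]
    ring
  have := porecCoeff_sq_le m x₁
  have := porecCoeff_sq_le m x₂
  nlinarith [norm_nonneg (aVec m x₁ + bVec m x₂)]

lemma porecState_eq_blochMatrix [NeZero m] (x₁ x₂ : ZMod m) :
    porecState m x₁ x₂ = blochMatrix (aVec m x₁ + bVec m x₂) :=
  rfl

lemma porecState_eq_add [NeZero m] (x₁ x₂ : ZMod m) :
    porecState m x₁ x₂ = blochMatrix (aVec m x₁) + (1 / 2 : ℝ) • dotSigma (bVec m x₂) := by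
  rw [porecState, dotSigma_add, ← add_assoc, smul_add, blochMatrix]

lemma porecMeas₁_eq [NeZero m] :
    porecMeas₁ m = blochMeasurement 0 1 (EuclideanSpace.single 2 1) := by
  ext1 b
  simp only [porecMeas₁, blochMeasurement, blochMatrix, dotSigma_neg, dotSigma_single_two,
    sub_eq_add_neg]

lemma porecMeas₂_eq [NeZero m] :
    porecMeas₂ m = blochMeasurement 0 1 (EuclideanSpace.single 0 1) := by
  ext1 b
  simp only [porecMeas₂, blochMeasurement, blochMatrix, dotSigma_neg, dotSigma_single_zero,
    sub_eq_add_neg]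

lemma posSemidef_porecMeas₁ [NeZero m] (b : ZMod m) : (porecMeas₁ m b).PosSemidef := by
  rw [porecMeas₁_eq]; exact posSemidef_blochMeasurement _ _ (by simp) b

lemma posSemidef_porecMeas₂ [NeZero m] (b : ZMod m) : (porecMeas₂ m b).PosSemidef := by
  rw [porecMeas₂_eq]; exact posSemidef_blochMeasurement _ _ (by simp) b

lemma sum_porecMeas₁ [NeZero m] [Nontrivial (ZMod m)] : ∑ b, porecMeas₁ m b = 1 := by
  rw [porecMeas₁_eq]; exact sum_blochMeasurement zero_ne_one _

lemma sum_porecMeas₂ [NeZero m] [Nontrivial (ZMod m)] : ∑ b, porecMeas₂ m b = 1 := by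
  rw [porecMeas₂_eq]; exact sum_blochMeasurement zero_ne_one _

lemma re_trace_porecState_mul_porecMeas₁_self [NeZero m] (x₁ x₂ : ZMod m) :
    (porecState m x₁ x₂ * porecMeas₁ m x₁).trace.re = porecGuess m x₁ := by
  rw [porecMeas₁_eq, porecState_eq_blochMatrix, re_trace_blochMatrix_mul_blochMeasurement]
  simp only [aVec_eq_smul, bVec_eq_smul, inner_add_left, EuclideanSpace.inner_single_right]
  unfold porecGuess porecCoeff
  split_ifs <;> simp <;> ring

lemma re_trace_porecState_mul_porecMeas₂_self [NeZero m] (x₁ x₂ : ZMod m) :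
    (porecState m x₁ x₂ * porecMeas₂ m x₂).trace.re = porecGuess m x₂ := by
  rw [porecMeas₂_eq, porecState_eq_blochMatrix, re_trace_blochMatrix_mul_blochMeasurement]
  simp only [aVec_eq_smul, bVec_eq_smul, inner_add_left, EuclideanSpace.inner_single_right]
  unfold porecGuess porecCoeff
  split_ifs <;> simp <;> ring

lemma sum_porecGuess [NeZero m] [Nontrivial (ZMod m)] : ∑ l, porecGuess m l = 1 - (√2)⁻¹ := by
  simp only [porecGuess, sum_ite_eq_ite_eq zero_ne_one]; ring

lemma sum_porecSuccess [NeZero m] [Nontrivial (ZMod m)] :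
    ∑ x : ZMod m × ZMod m,
        ((∑ b ∈ univ.filter (fun b => b ≠ x.1),
            ((porecState m x.1 x.2 * porecMeas₁ m b).trace).re) +
          (∑ b ∈ univ.filter (fun b => b ≠ x.2),
            ((porecState m x.1 x.2 * porecMeas₂ m b).trace).re)) =
      2 * (m : ℝ) ^ 2 - 2 * m * (1 - (√2)⁻¹) := by
  simp only [sum_filter_ne_re_trace_mul _ (sum_porecMeas₁ m),
    sum_filter_ne_re_trace_mul _ (sum_porecMeas₂ m), re_trace_porecState_mul_porecMeas₁_self,
    re_trace_porecState_mul_porecMeas₂_self]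
  simp [porecState_eq_blochMatrix, trace_blochMatrix, Finset.sum_add_distrib,
    Fintype.sum_prod_type, ← Finset.mul_sum, sum_porecGuess]
  ring

end Porec

theorem porec2m_projective_qubit_optimal_strategy_general
    (m : ℕ) (hm : Nat.Prime m) [NeZero m] :
    (∀ x₁ x₂ : ZMod m,
      (porecState m x₁ x₂).PosSemidef ∧ (porecState m x₁ x₂).trace = 1) ∧
    (∀ b : ZMod m, (porecMeas₁ m b).PosSemidef) ∧ (∑ b : ZMod m, porecMeas₁ m b = 1) ∧
    (∀ b : ZMod m, (porecMeas₂ m b).PosSemidef) ∧ (∑ b : ZMod m, porecMeas₂ m b = 1) ∧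
    (∀ r₁ r₂ : ZMod m, r₁ ≠ 0 → r₂ ≠ 0 → ∀ k k' : ZMod m,
      ∑ x ∈ Finset.univ.filter (fun x : ZMod m × ZMod m => r₁ * x.1 + r₂ * x.2 = k),
        porecState m x.1 x.2 =
      ∑ x ∈ Finset.univ.filter (fun x : ZMod m × ZMod m => r₁ * x.1 + r₂ * x.2 = k'),
        porecState m x.1 x.2) ∧
    (1 / (2 * (m : ℝ) ^ 2)) *
        ∑ x : ZMod m × ZMod m,
          ((∑ b ∈ Finset.univ.filter (fun b => b ≠ x.1),
              ((porecState m x.1 x.2 * porecMeas₁ m b).trace).re) +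
           (∑ b ∈ Finset.univ.filter (fun b => b ≠ x.2),
              ((porecState m x.1 x.2 * porecMeas₂ m b).trace).re))
      = ((m : ℝ) - 1) / m + 1 / (m * Real.sqrt 2) := by
  have : Fact m.Prime := ⟨hm⟩
  refine ⟨fun x₁ x₂ => ⟨posSemidef_blochMatrix (norm_aVec_add_bVec_le_one m x₁ x₂),
      trace_blochMatrix _⟩, posSemidef_porecMeas₁ m, sum_porecMeas₁ m, posSemidef_porecMeas₂ m,
    sum_porecMeas₂ m, fun r₁ r₂ h₁ h₂ k k' => ?_, ?_⟩
  · have line_sum (k : ZMod m) := sum_filter_linear_eq_add h₁ h₂ k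
      (fun t => blochMatrix (aVec m t)) (fun t => (1 / 2 : ℝ) • dotSigma (bVec m t))
    simp only [porecState_eq_add]
    exact (line_sum k).trans (line_sum k').symm
  · rw [sum_porecSuccess]
    have : (m : ℝ) ≠ 0 := NeZero.ne _
    field_simp
    ring

/-- **Achievability of the projective qubit bound for the (2,m) POREC.** For every prime
`m ≥ 3`, the explicit strategy built from the zero-sum Bloch families `a`, `b` and
complementary Pauli measurements is a valid, fully parity-oblivious qubit strategy with
two-outcome projective measurements achieving POREC success probability exactly
`(m−1)/m + 1/(m√2)`. -/
theorem porec2m_projective_qubit_optimal_strategy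
    (m : ℕ) (hm : Nat.Prime m) (hm3 : 3 ≤ m) [NeZero m] :
    (∀ x₁ x₂ : ZMod m,
      (porecState m x₁ x₂).PosSemidef ∧ (porecState m x₁ x₂).trace = 1) ∧
    (∀ b : ZMod m, (porecMeas₁ m b).PosSemidef) ∧ (∑ b : ZMod m, porecMeas₁ m b = 1) ∧
    (∀ b : ZMod m, (porecMeas₂ m b).PosSemidef) ∧ (∑ b : ZMod m, porecMeas₂ m b = 1) ∧
    (∀ r₁ r₂ : ZMod m, r₁ ≠ 0 → r₂ ≠ 0 → ∀ k k' : ZMod m,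
      ∑ x ∈ Finset.univ.filter (fun x : ZMod m × ZMod m => r₁ * x.1 + r₂ * x.2 = k),
        porecState m x.1 x.2 =
      ∑ x ∈ Finset.univ.filter (fun x : ZMod m × ZMod m => r₁ * x.1 + r₂ * x.2 = k'),
        porecState m x.1 x.2) ∧
    (1 / (2 * (m : ℝ) ^ 2)) *
        ∑ x : ZMod m × ZMod m,
          ((∑ b ∈ Finset.univ.filter (fun b => b ≠ x.1),
              ((porecState m x.1 x.2 * porecMeas₁ m b).trace).re) +
           (∑ b ∈ Finset.univ.filter (fun b => b ≠ x.2),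
              ((porecState m x.1 x.2 * porecMeas₂ m b).trace).re))
      = ((m : ℝ) - 1) / m + 1 / (m * Real.sqrt 2) :=
  porec2m_projective_qubit_optimal_strategy_general m hm

end
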